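/- Assume 𝕍 is continuous. If A ∈ 𝓕 and (P_n) is a sequence in Θ with P_n(A) → 1, then there exists a probability measure P ∈ Θ with P(A) = 1. -/

import Mathlib

/-!
Take a limit `m s = lim_U Pₙ s` of the values of the `Pₙ` along an ultrafilter `U` finer than
`atTop`. It exists because `ℝ≥0∞` is compact, it is finitely additive on measurable sets, and
it is dominated by `V`. Continuity of `V` at `∅` then forces continuity of `m` at `∅`, which for
a finite additive content on a σ-algebra is σ-additivity. So `m` is a probability measure
dominated by `V`, hence in `Θ` by maximality, and `m A = lim Pₙ A = 1`.
-/

open MeasureTheory Filter Topology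
open scoped ENNReal

namespace MeasureTheory

variable {Ω ι : Type*} [MeasurableSpace Ω]

theorem isSetRing_measurableSet : IsSetRing {s : Set Ω | MeasurableSet s} :=
  ⟨.empty, fun _ _ ↦ .union, fun _ _ ↦ .diff⟩

noncomputable def AddContent.toMeasureOfTendstoZero
    (m : AddContent ℝ≥0∞ {s : Set Ω | MeasurableSet s})
    (hm_ne_top : ∀ s, MeasurableSet s → m s ≠ ∞)
    (hm_tendsto : ∀ ⦃s : ℕ → Set Ω⦄, (∀ n, MeasurableSet (s n)) → Antitone s →
      ⋂ n, s n = ∅ → Tendsto (fun n ↦ m (s n)) atTop (𝓝 0)) : Measure Ω :=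
  Measure.ofMeasurable (fun s _ ↦ m s) addContent_empty fun _ hf hd ↦
    addContent_iUnion_eq_sum_of_tendsto_zero isSetRing_measurableSet m hm_ne_top hm_tendsto hf
      (MeasurableSet.iUnion hf) hd

theorem AddContent.toMeasureOfTendstoZero_apply
    (m : AddContent ℝ≥0∞ {s : Set Ω | MeasurableSet s}) (hm_ne_top hm_tendsto) {s : Set Ω}
    (hs : MeasurableSet s) : m.toMeasureOfTendstoZero hm_ne_top hm_tendsto s = m s :=
  Measure.ofMeasurable_apply s hs

section UltrafilterLimit

variable (U : Ultrafilter ι) (μ : ι → Measure Ω)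

noncomputable def ultrafilterLimFun (s : Set Ω) : ℝ≥0∞ :=
  (U.map fun i ↦ μ i s).lim

variable {U μ}

theorem tendsto_ultrafilterLimFun (s : Set Ω) :
    Tendsto (fun i ↦ μ i s) U (𝓝 (ultrafilterLimFun U μ s)) :=
  Ultrafilter.le_nhds_lim _

theorem ultrafilterLimFun_eq_of_tendsto {s : Set Ω} {a : ℝ≥0∞}
    (h : Tendsto (fun i ↦ μ i s) U (𝓝 a)) : ultrafilterLimFun U μ s = a :=
  tendsto_nhds_unique (tendsto_ultrafilterLimFun s) h

theorem ultrafilterLimFun_le {s : Set Ω} {c : ℝ≥0∞} (h : ∀ i, μ i s ≤ c) :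
    ultrafilterLimFun U μ s ≤ c :=
  le_of_tendsto' (tendsto_ultrafilterLimFun s) h

variable (U μ)

noncomputable def ultrafilterLimContent : AddContent ℝ≥0∞ {s : Set Ω | MeasurableSet s} :=
  isSetRing_measurableSet.addContent_of_union (ultrafilterLimFun U μ)
    (ultrafilterLimFun_eq_of_tendsto (by simp))
    fun {s t} _ ht hst ↦ ultrafilterLimFun_eq_of_tendsto <| by
      simpa only [measure_union hst ht] using
        (tendsto_ultrafilterLimFun s).add (tendsto_ultrafilterLimFun t)

noncomputable def ultrafilterLimMeasure [∀ i, IsProbabilityMeasure (μ i)] (V : Set Ω → ℝ≥0∞)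
    (hμV : ∀ i s, MeasurableSet s → μ i s ≤ V s)
    (hV : ∀ s : ℕ → Set Ω, (∀ n, MeasurableSet (s n)) → Antitone s →
      ⋂ n, s n = ∅ → Tendsto (fun n ↦ V (s n)) atTop (𝓝 0)) : Measure Ω :=
  (ultrafilterLimContent U μ).toMeasureOfTendstoZero
    (fun _ _ ↦ (ultrafilterLimFun_le fun _ ↦ prob_le_one).trans_lt ENNReal.one_lt_top |>.ne)
    fun s hs hanti hempty ↦ tendsto_of_tendsto_of_tendsto_of_le_of_le tendsto_const_nhds
      (hV s hs hanti hempty) (fun _ ↦ zero_le)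
      fun n ↦ ultrafilterLimFun_le fun i ↦ hμV i (s n) (hs n)

variable [∀ i, IsProbabilityMeasure (μ i)] {V : Set Ω → ℝ≥0∞}
  (hμV : ∀ i s, MeasurableSet s → μ i s ≤ V s)
  (hV : ∀ s : ℕ → Set Ω, (∀ n, MeasurableSet (s n)) → Antitone s →
    ⋂ n, s n = ∅ → Tendsto (fun n ↦ V (s n)) atTop (𝓝 0))

theorem ultrafilterLimMeasure_apply {s : Set Ω} (hs : MeasurableSet s) :
    ultrafilterLimMeasure U μ V hμV hV s = ultrafilterLimFun U μ s :=
  AddContent.toMeasureOfTendstoZero_apply _ _ _ hs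

instance : IsProbabilityMeasure (ultrafilterLimMeasure U μ V hμV hV) :=
  ⟨by rw [ultrafilterLimMeasure_apply _ _ _ _ .univ]
      exact ultrafilterLimFun_eq_of_tendsto (by simp)⟩

theorem ultrafilterLimMeasure_le {s : Set Ω} (hs : MeasurableSet s) :
    ultrafilterLimMeasure U μ V hμV hV s ≤ V s := by
  rw [ultrafilterLimMeasure_apply _ _ _ _ hs]
  exact ultrafilterLimFun_le fun i ↦ hμV i s hs

end UltrafilterLimit

end MeasureTheory

theorem stmt_10_general {Ω : Type*} [MeasurableSpace Ω]
    (Θ : Set (Measure Ω))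
    (hprob : ∀ P ∈ Θ, IsProbabilityMeasure P)
    (V : Set Ω → ℝ≥0∞)
    (hV : ∀ A : Set Ω, V A = ⨆ P ∈ Θ, P A)
    (hmax : ∀ P : Measure Ω, IsProbabilityMeasure P →
      (∀ A, MeasurableSet A → P A ≤ V A) → P ∈ Θ)
    (hcont : ∀ A : ℕ → Set Ω, (∀ n, MeasurableSet (A n)) → Antitone A →
      (⋂ n, A n) = ∅ → Tendsto (fun n => V (A n)) atTop (nhds 0))
    (A : Set Ω) (hA : MeasurableSet A)
    (Pseq : ℕ → Measure Ω) (hPseq : ∀ n, Pseq n ∈ Θ)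
    (hconv : Tendsto (fun n => Pseq n A) atTop (nhds 1)) :
    ∃ P ∈ Θ, P A = 1 := by
  have : ∀ n, IsProbabilityMeasure (Pseq n) := fun n ↦ hprob _ (hPseq n)
  have hPV : ∀ n s, MeasurableSet s → Pseq n s ≤ V s := fun n s _ ↦
    (hV s).symm ▸ le_iSup₂ (f := fun P (_ : P ∈ Θ) ↦ P s) (Pseq n) (hPseq n)
  let U : Ultrafilter ℕ := .of atTop
  let P := ultrafilterLimMeasure U Pseq V hPV hcont
  refine ⟨P, hmax P inferInstance fun s hs ↦ ultrafilterLimMeasure_le U Pseq hPV hcont hs, ?_⟩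
  rw [ultrafilterLimMeasure_apply U Pseq hPV hcont hA]
  exact ultrafilterLimFun_eq_of_tendsto (hconv.mono_left (Ultrafilter.of_le _))

/-- If `V` is continuous, `A` is measurable and `Pₙ ∈ Θ` with
`Pₙ(A) → 1`, then some `P ∈ Θ` has `P(A) = 1`. -/
theorem stmt_10 {Ω : Type*} [MeasurableSpace Ω]
    (Θ : Set (Measure Ω)) (hΘne : Θ.Nonempty)
    (hprob : ∀ P ∈ Θ, IsProbabilityMeasure P)
    (V : Set Ω → ℝ≥0∞)
    (hV : ∀ A : Set Ω, V A = ⨆ P ∈ Θ, P A)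
    (hmax : ∀ P : Measure Ω, IsProbabilityMeasure P →
      (∀ A, MeasurableSet A → P A ≤ V A) → P ∈ Θ)
    (hcont : ∀ A : ℕ → Set Ω, (∀ n, MeasurableSet (A n)) → Antitone A →
      (⋂ n, A n) = ∅ → Tendsto (fun n => V (A n)) atTop (nhds 0))
    (A : Set Ω) (hA : MeasurableSet A)
    (Pseq : ℕ → Measure Ω) (hPseq : ∀ n, Pseq n ∈ Θ)
    (hconv : Tendsto (fun n => Pseq n A) atTop (nhds 1)) :
    ∃ P ∈ Θ, P A = 1 :=
  stmt_10_general Θ hprob V hV hmax hcont A hA Pseq hPseq hconv
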